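/- Let ν_λ be a Poisson process of intensity λ > 0 on ℝ, let z_t be a deterministic path with z_t/t → a as t → ∞, and suppose E[(L_λ(z_t,t) − ν_λ(z_t − λ⁻²t) − 2λ⁻¹t)²]/t → 0 as t → ∞. Then Var(L_λ(z_t,t))/t → |aλ − 1/λ| as t → ∞. -/

import Mathlib

/-!
Since `ν(0) = 0`, each `ν(x)` is plus or minus a Poisson variable of mean `λ|x|`, so it has
variance `λ|x|`. Hence the approximant `Y_t = ν(z_t - λ⁻²t) + 2t/λ` has variance
`λ|z_t - λ⁻²t| ~ |aλ - 1/λ| t`. The standard deviation is the `L²` norm of the centred variable,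
so `|√Var L - √Var Y_t| ≤ ‖L - Y_t‖₂ = o(√t)`, and the asymptotics transfer from `Y_t` to `L`.
-/

open MeasureTheory ProbabilityTheory Filter Real
open scoped NNReal Nat Topology

/-- The Stein–Chen identity `E[N f(N)] = r E[f(N + 1)]` for a Poisson variable `N` of mean `r`. -/
lemma HasSum.poisson_weight_mul_cast_mul {r : ℝ≥0} {f : ℕ → ℝ} {S : ℝ}
    (h : HasSum (fun n => Real.exp (-r) * r ^ n / n ! * f (n + 1)) S) :
    HasSum (fun n => Real.exp (-r) * r ^ n / n ! * (n * f n)) (r * S) := by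
  refine (hasSum_nat_add_iff' 1).mp ?_
  simp only [Finset.sum_range_one, Nat.cast_zero, zero_mul, mul_zero, sub_zero]
  refine (h.mul_left (r : ℝ)).congr_fun fun n => ?_
  rw [Nat.factorial_succ]
  push_cast
  field_simp
  ring

namespace ProbabilityTheory

lemma hasSum_poisson_weight_mul_cast (r : ℝ≥0) :
    HasSum (fun n : ℕ => exp (-r) * r ^ n / n ! * (n : ℝ)) r := by
  have h := (hasSum_one_poissonMeasure r).mul_right 1
  simpa only [mul_one] using h.poisson_weight_mul_cast_mul (f := fun _ => 1)

lemma hasSum_poisson_weight_mul_cast_sq (r : ℝ≥0) :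
    HasSum (fun n : ℕ => exp (-r) * r ^ n / n ! * (n : ℝ) ^ 2) (r * (r + 1)) := by
  have h := (hasSum_poisson_weight_mul_cast r).add (hasSum_one_poissonMeasure r)
  simp only [← mul_add_one, ← Nat.cast_succ] at h
  simpa only [sq] using h.poisson_weight_mul_cast_mul

lemma memLp_two_id_map_cast_poissonMeasure (r : ℝ≥0) : MemLp id 2 Po(ℝ, r) := by
  refine (memLp_two_iff_integrable_sq aestronglyMeasurable_id).mpr ?_
  refine (integrable_map_measure (by fun_prop) Measurable.of_discrete.aemeasurable).mpr
    (integrable_poissonMeasure_iff.mpr ?_)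
  simpa using (hasSum_poisson_weight_mul_cast_sq r).summable

lemma variance_id_map_cast_poissonMeasure (r : ℝ≥0) : Var[id; Po(ℝ, r)] = r := by
  rw [variance_eq_sub (memLp_two_id_map_cast_poissonMeasure r),
    integral_map Measurable.of_discrete.aemeasurable (by fun_prop),
    integral_map Measurable.of_discrete.aemeasurable (by fun_prop),
    integral_poissonMeasure, integral_poissonMeasure]
  simp only [Pi.pow_apply, id, smul_eq_mul]
  rw [(hasSum_poisson_weight_mul_cast_sq r).tsum_eq, (hasSum_poisson_weight_mul_cast r).tsum_eq]
  ring

variable {Ω : Type*} [MeasurableSpace Ω] {P : Measure Ω} {X Y : Ω → ℝ}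

lemma HasLaw.memLp_two_of_map_cast_poissonMeasure {r : ℝ≥0} (hX : HasLaw X Po(ℝ, r) P) :
    MemLp X 2 P := by
  have h := memLp_two_id_map_cast_poissonMeasure r
  rwa [← hX.map_eq, memLp_map_measure_iff (by fun_prop) hX.aemeasurable] at h

lemma HasLaw.variance_eq_of_map_cast_poissonMeasure {r : ℝ≥0} (hX : HasLaw X Po(ℝ, r) P) :
    Var[X; P] = r := by
  rw [hX.variance_eq, variance_id_map_cast_poissonMeasure]

lemma _root_.MeasureTheory.MemLp.toReal_eLpNorm_two {f : Ω → ℝ} (hf : MemLp f 2 P) :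
    (eLpNorm f 2 P).toReal = √(∫ ω, f ω ^ 2 ∂P) := by
  rw [hf.eLpNorm_eq_integral_rpow_norm two_ne_zero ENNReal.ofNat_ne_top,
    ENNReal.toReal_ofReal (by positivity), sqrt_eq_rpow, ENNReal.toReal_ofNat, one_div]
  simp only [norm_eq_abs, rpow_two, sq_abs]

lemma sqrt_variance_eq_toReal_eLpNorm [IsFiniteMeasure P] (hX : MemLp X 2 P) :
    √Var[X; P] = (eLpNorm (fun ω => X ω - P[X]) 2 P).toReal := by
  have hc : MemLp (fun ω => X ω - P[X]) 2 P := hX.sub (memLp_const _)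
  rw [hc.toReal_eLpNorm_two, variance_eq_integral hX.aemeasurable]

lemma sqrt_variance_le_add [IsProbabilityMeasure P] (hX : MemLp X 2 P) (hY : MemLp Y 2 P) :
    √Var[X; P] ≤ √Var[Y; P] + √(∫ ω, (X ω - Y ω) ^ 2 ∂P) := by
  have hZ : MemLp (fun ω => X ω - Y ω) 2 P := hX.sub hY
  have hcY : MemLp (fun ω => Y ω - P[Y]) 2 P := hY.sub (memLp_const _)
  have hcZ : MemLp (fun ω => X ω - Y ω - P[fun ω => X ω - Y ω]) 2 P := hZ.sub (memLp_const _)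
  have hsplit : (fun ω => X ω - P[X])
      = (fun ω => Y ω - P[Y]) + fun ω => X ω - Y ω - P[fun ω => X ω - Y ω] := by
    ext ω
    simp only [Pi.add_apply, integral_sub (hX.integrable one_le_two) (hY.integrable one_le_two)]
    ring
  calc √Var[X; P]
      ≤ √Var[Y; P] + √Var[fun ω => X ω - Y ω; P] := by
        rw [sqrt_variance_eq_toReal_eLpNorm hX, sqrt_variance_eq_toReal_eLpNorm hY,
          sqrt_variance_eq_toReal_eLpNorm hZ, hsplit]
        exact ENNReal.toReal_le_add (eLpNorm_add_le hcY.1 hcZ.1 one_le_two) hcY.2.ne hcZ.2.ne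
    _ ≤ √Var[Y; P] + √(∫ ω, (X ω - Y ω) ^ 2 ∂P) := by
        gcongr
        exact variance_le_expectation_sq hZ.1

lemma abs_sqrt_variance_sub_sqrt_variance_le [IsProbabilityMeasure P] (hX : MemLp X 2 P)
    (hY : MemLp Y 2 P) : |√Var[X; P] - √Var[Y; P]| ≤ √(∫ ω, (X ω - Y ω) ^ 2 ∂P) := by
  have hXY := sqrt_variance_le_add hX hY
  have hYX := sqrt_variance_le_add hY hX
  simp only [← neg_sub (X _), neg_sq] at hYX
  exact abs_sub_le_iff.mpr ⟨by linarith, by linarith⟩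

lemma tendsto_variance_div_of_tendsto_integral_sq_sub_div [IsProbabilityMeasure P]
    {ι : Type*} {l : Filter ι} [l.NeBot] {X Y : ι → Ω → ℝ} {d : ι → ℝ} {c : ℝ}
    (hX : ∀ i, MemLp (X i) 2 P) (hY : ∀ i, MemLp (Y i) 2 P) (hd : ∀ᶠ i in l, 0 < d i)
    (hYvar : Tendsto (fun i => Var[Y i; P] / d i) l (𝓝 c))
    (hXY : Tendsto (fun i => (∫ ω, (X i ω - Y i ω) ^ 2 ∂P) / d i) l (𝓝 0)) :
    Tendsto (fun i => Var[X i; P] / d i) l (𝓝 c) := by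
  have hc : 0 ≤ c :=
    ge_of_tendsto hYvar (hd.mono fun i hi => div_nonneg (variance_nonneg _ _) hi.le)
  have hclose : ∀ᶠ i in l, ‖√(Var[X i; P] / d i) - √(Var[Y i; P] / d i)‖
      ≤ √((∫ ω, (X i ω - Y i ω) ^ 2 ∂P) / d i) := by
    filter_upwards [hd] with i hi
    rw [sqrt_div' _ hi.le, sqrt_div' _ hi.le, sqrt_div' _ hi.le, ← sub_div, norm_div,
      norm_of_nonneg (sqrt_nonneg _)]
    gcongr
    exact abs_sqrt_variance_sub_sqrt_variance_le (hX i) (hY i)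
  have hsqrtX : Tendsto (fun i => √(Var[X i; P] / d i)) l (𝓝 √c) := by
    have hdiff := squeeze_zero_norm' hclose (by simpa using hXY.sqrt)
    simpa using hYvar.sqrt.add hdiff
  have hsq := hsqrtX.pow 2
  rw [sq_sqrt hc] at hsq
  refine hsq.congr' ?_
  filter_upwards [hd] with i hi
  exact sq_sqrt (div_nonneg (variance_nonneg _ _) hi.le)

def HasPoissonIncrements (P : Measure Ω) (lam : ℝ) (ν : Ω → ℝ → ℝ) : Prop :=
  ∀ x y : ℝ, x ≤ y →
    P.map (fun ω => ν ω y - ν ω x) = Po(ℝ, (lam * (y - x)).toNNReal)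

section CountingFunction

variable {lam : ℝ} {ν : Ω → ℝ → ℝ}

lemma memLp_two_of_hasPoissonIncrements (hνmeas : ∀ x, Measurable fun ω => ν ω x)
    (hν0 : ∀ ω, ν ω 0 = 0) (hpois : HasPoissonIncrements P lam ν) (x : ℝ) :
    MemLp (fun ω => ν ω x) 2 P := by
  rcases le_total 0 x with hx | hx
  · have h : HasLaw (fun ω => ν ω x - ν ω 0) _ P :=
      ⟨((hνmeas x).sub (hνmeas 0)).aemeasurable, hpois 0 x hx⟩
    simpa [hν0] using h.memLp_two_of_map_cast_poissonMeasure
  · have h : HasLaw (fun ω => ν ω 0 - ν ω x) _ P :=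
      ⟨((hνmeas 0).sub (hνmeas x)).aemeasurable, hpois x 0 hx⟩
    have hneg := h.memLp_two_of_map_cast_poissonMeasure
    simp only [hν0, zero_sub] at hneg
    exact (memLp_neg_iff (f := fun ω => ν ω x)).mp hneg

lemma variance_eq_mul_abs_of_hasPoissonIncrements (hlam : 0 ≤ lam)
    (hνmeas : ∀ x, Measurable fun ω => ν ω x) (hν0 : ∀ ω, ν ω 0 = 0)
    (hpois : HasPoissonIncrements P lam ν) (x : ℝ) :
    Var[fun ω => ν ω x; P] = lam * |x| := by
  rcases le_total 0 x with hx | hx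
  · have h : HasLaw (fun ω => ν ω x - ν ω 0) _ P :=
      ⟨((hνmeas x).sub (hνmeas 0)).aemeasurable, hpois 0 x hx⟩
    have hvar := h.variance_eq_of_map_cast_poissonMeasure
    simp only [hν0, sub_zero] at hvar
    rw [hvar, abs_of_nonneg hx, coe_toNNReal _ (mul_nonneg hlam hx)]
  · have h : HasLaw (fun ω => ν ω 0 - ν ω x) _ P :=
      ⟨((hνmeas 0).sub (hνmeas x)).aemeasurable, hpois x 0 hx⟩
    have hvar := h.variance_eq_of_map_cast_poissonMeasure
    simp only [hν0, zero_sub, variance_fun_neg] at hvar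
    rw [hvar, abs_of_nonpos hx, coe_toNNReal _ (mul_nonneg hlam (neg_nonneg.mpr hx))]

end CountingFunction

end ProbabilityTheory

lemma tendsto_abs_sub_mul_div_atTop {z : ℝ → ℝ} {a : ℝ}
    (hz : Tendsto (fun t => z t / t) atTop (𝓝 a)) (b : ℝ) :
    Tendsto (fun t => |z t - b * t| / t) atTop (𝓝 |a - b|) := by
  refine (hz.sub_const b).abs.congr' ?_
  filter_upwards [eventually_gt_atTop 0] with t ht
  have hquot : z t / t - b = (z t - b * t) / t := by field_simp
  rw [hquot, abs_div, abs_of_pos ht]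

theorem hammersley_variance_noncharacteristic_general
    {Ω : Type*} [MeasurableSpace Ω] (P : Measure Ω) [IsProbabilityMeasure P]
    (lam : ℝ) (hlam : 0 < lam)
    (ν : Ω → ℝ → ℝ)   -- signed counting function of the equilibrium measure
    (L : Ω → ℝ → ℝ → ℝ)  -- L ω x t = L_λ(x,t)
    (hνmeas : ∀ x : ℝ, Measurable fun ω => ν ω x)
    -- ν is the counting function of a Poisson process of intensity λ:
    (hν0 : ∀ ω, ν ω 0 = 0)
    (hpois : ∀ x y : ℝ, x ≤ y →
      Measure.map (fun ω => ν ω y - ν ω x) P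
        = Measure.map (fun n : ℕ => (n : ℝ))
            (poissonMeasure (Real.toNNReal (lam * (y - x)))))
    -- square integrability
    (hLsq : ∀ x t : ℝ, MemLp (fun ω => L ω x t) 2 P)
    -- the deterministic path
    (z : ℝ → ℝ) (a : ℝ) (hz : Tendsto (fun t => z t / t) atTop (nhds a))
    -- the L² approximation along the characteristic
    (hL2 : Tendsto
      (fun t : ℝ =>
        (∫ ω, (L ω (z t) t - (ν ω (z t - t / lam ^ 2) + 2 * t / lam)) ^ 2 ∂P) / t)
      atTop (nhds 0)) :
    Tendsto (fun t : ℝ => variance (fun ω => L ω (z t) t) P / t)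
      atTop (nhds |a * lam - 1 / lam|) := by
  have hν : ∀ x, MemLp (fun ω => ν ω x) 2 P :=
    memLp_two_of_hasPoissonIncrements hνmeas hν0 hpois
  refine tendsto_variance_div_of_tendsto_integral_sq_sub_div
    (Y := fun t ω => ν ω (z t - t / lam ^ 2) + 2 * t / lam) (fun t => hLsq (z t) t)
    (fun t => (hν _).add (memLp_const _)) (eventually_gt_atTop 0) ?_ hL2
  have hvarY (t : ℝ) : Var[fun ω => ν ω (z t - t / lam ^ 2) + 2 * t / lam; P]
      = lam * |z t - (lam ^ 2)⁻¹ * t| := by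
    rw [variance_add_const (hν _).1,
      variance_eq_mul_abs_of_hasPoissonIncrements hlam.le hνmeas hν0 hpois, div_eq_inv_mul]
  have hlimit : lam * |a - (lam ^ 2)⁻¹| = |a * lam - 1 / lam| := by
    have hfactor : a * lam - 1 / lam = lam * (a - (lam ^ 2)⁻¹) := by field_simp
    rw [hfactor, abs_mul, abs_of_pos hlam]
  convert (tendsto_abs_sub_mul_div_atTop hz (lam ^ 2)⁻¹).const_mul lam using 2 with t
  · rw [hvarY, mul_div_assoc]
  · exact hlimit.symm

/-- in the classical Hammersley model with rate-`λ` Poisson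
equilibrium initial measure, if `z_t/t → a` and
`E[(L_λ(z_t,t) − ν_λ(z_t − λ⁻²t) − 2λ⁻¹t)²]/t → 0`, then
`Var(L_λ(z_t,t))/t → |aλ − 1/λ|`. -/
theorem hammersley_variance_noncharacteristic
    {Ω : Type*} [MeasurableSpace Ω] (P : Measure Ω) [IsProbabilityMeasure P]
    (lam : ℝ) (hlam : 0 < lam)
    (ν : Ω → ℝ → ℝ)   -- signed counting function of the equilibrium measure
    (L : Ω → ℝ → ℝ → ℝ)  -- L ω x t = L_λ(x,t)
    (hνmeas : ∀ x : ℝ, Measurable fun ω => ν ω x)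
    (hLmeas : ∀ x t : ℝ, Measurable fun ω => L ω x t)
    -- ν is the counting function of a Poisson process of intensity λ:
    (hν0 : ∀ ω, ν ω 0 = 0)
    (hpois : ∀ x y : ℝ, x ≤ y →
      Measure.map (fun ω => ν ω y - ν ω x) P
        = Measure.map (fun n : ℕ => (n : ℝ))
            (poissonMeasure (Real.toNNReal (lam * (y - x)))))
    -- square integrability
    (hLsq : ∀ x t : ℝ, MemLp (fun ω => L ω x t) 2 P)
    -- the deterministic path
    (z : ℝ → ℝ) (a : ℝ) (hz : Tendsto (fun t => z t / t) atTop (nhds a))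
    -- the L² approximation along the characteristic
    (hL2 : Tendsto
      (fun t : ℝ =>
        (∫ ω, (L ω (z t) t - (ν ω (z t - t / lam ^ 2) + 2 * t / lam)) ^ 2 ∂P) / t)
      atTop (nhds 0)) :
    Tendsto (fun t : ℝ => variance (fun ω => L ω (z t) t) P / t)
      atTop (nhds |a * lam - 1 / lam|) :=
  hammersley_variance_noncharacteristic_general P lam hlam ν L hνmeas hν0 hpois hLsq z a hz hL2
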